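/- arXiv:2412.20126 — 5 statements merged into one kernel-verified Lean document; each statement's English description precedes it below -/
import Mathlib

section
/- For every ε ∈ [0, 1), there exists an odd integer n ≥ 3 such that (n - 1 + ε)/2 < n·cos(π/n)/(1 + cos(π/n)). -/
/-!
With `c = cos (π / n)` the inequality is equivalent to `n (1 - c) < (1 - ε) (1 + c)`.
Since `1 - c ≤ (π / n)² / 2`, the left side is at most `π² / (2n)`, which tends to `0`,
while the right side stays at least `1 - ε > 0` once `c ≥ 0`.
-/

open Real

lemma half_lt_div_one_add_iff {n c ε : ℝ} (hc : 0 < 1 + c) :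
    (n - 1 + ε) / 2 < n * c / (1 + c) ↔ n * (1 - c) < (1 - ε) * (1 + c) := by
  rw [div_lt_div_iff₀ two_pos hc]
  constructor <;> intro h <;> linarith

lemma mul_one_sub_cos_pi_div_le {n : ℝ} (hn : 0 < n) :
    n * (1 - cos (π / n)) ≤ π ^ 2 / (2 * n) := by
  have hcos : 1 - cos (π / n) ≤ (π / n) ^ 2 / 2 := by
    linarith [one_sub_sq_div_two_le_cos (x := π / n)]
  calc n * (1 - cos (π / n)) ≤ n * ((π / n) ^ 2 / 2) := by gcongr
    _ = π ^ 2 / (2 * n) := by field_simp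

lemma cos_pi_div_nonneg {n : ℝ} (hn : 2 ≤ n) : 0 ≤ cos (π / n) := by
  apply cos_nonneg_of_mem_Icc
  constructor
  · linarith [pi_pos, div_nonneg pi_pos.le (by linarith : (0 : ℝ) ≤ n)]
  · gcongr

lemma exists_odd_ge (x : ℝ) : ∃ n : ℕ, Odd n ∧ 3 ≤ n ∧ x ≤ n :=
  ⟨2 * ⌈x⌉₊ + 3, ⟨⌈x⌉₊ + 1, by ring⟩, by omega,
    (Nat.le_ceil x).trans (by exact_mod_cast (by omega : ⌈x⌉₊ ≤ 2 * ⌈x⌉₊ + 3))⟩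

theorem stmt_4 (ε : ℝ) (hε : ε ∈ Set.Ico (0 : ℝ) 1) :
    ∃ n : ℕ, Odd n ∧ 3 ≤ n ∧
      ((n : ℝ) - 1 + ε) / 2 < n * cos (π / n) / (1 + cos (π / n)) := by
  have hδ : 0 < 1 - ε := by linarith [hε.2]
  obtain ⟨n, hodd, hn3, hn⟩ := exists_odd_ge (5 / (1 - ε))
  have hn3' : (3 : ℝ) ≤ n := by exact_mod_cast hn3
  have hc := cos_pi_div_nonneg (n := n) (by linarith)
  have h5 : 5 ≤ (1 - ε) * n := (div_le_iff₀' hδ).1 hn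
  refine ⟨n, hodd, hn3, (half_lt_div_one_add_iff (by linarith)).2 ?_⟩
  have hπ : π ^ 2 < 10 := by nlinarith [pi_lt_d2, pi_pos]
  calc (n : ℝ) * (1 - cos (π / n)) ≤ π ^ 2 / (2 * n) := mul_one_sub_cos_pi_div_le (by linarith)
    _ < 5 / n := by rw [div_lt_div_iff₀ (by positivity) (by positivity)]; nlinarith
    _ ≤ 1 - ε := (div_le_iff₀ (by linarith)).2 h5
    _ ≤ (1 - ε) * (1 + cos (π / n)) := le_mul_of_one_le_right hδ.le (by linarith)
end

section
/- Let G be a graph whose vertex set is the disjoint union of d copies of the 5-cycle C_5 (with vertices v_{i,1},...,v_{i,5} in cyclic order for i = 1,...,d), together with additional edges making {v_{1,1},...,v_{d,1}} a clique. Assign weight 2 to each vertex v_{i,1} and weight 1 to all other vertices. Then the maximum weight of an independent set in G is 2d + 1. -/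
/-- The graph `𝒢_d`: `d` disjoint copies of the 5-cycle `C_5` (vertices `(i, j)`,
`j : ZMod 5`, with `j = 0` corresponding to `v_{i,1}`), together with extra edges
making the first vertices `{(i, 0)}` of all copies a clique. -/
def Gd (d : ℕ) : SimpleGraph (Fin d × ZMod 5) where
  Adj p q := (p.1 = q.1 ∧ (p.2 - q.2 = 1 ∨ q.2 - p.2 = 1)) ∨
    (p.1 ≠ q.1 ∧ p.2 = 0 ∧ q.2 = 0)
  symm := by
    constructor
    intro p q h
    rcases h with ⟨h1, h2⟩ | ⟨h1, h2, h3⟩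
    · exact Or.inl ⟨h1.symm, h2.symm⟩
    · exact Or.inr ⟨h1.symm, h3, h2⟩
  loopless := by
    constructor
    intro p h
    rcases h with ⟨_, h2 | h2⟩ | ⟨h1, _⟩
    · rw [sub_self] at h2; exact absurd h2 (by decide)
    · rw [sub_self] at h2; exact absurd h2 (by decide)
    · exact h1 rfl

/-- Weights: `2` on each first vertex `v_{i,1}` (i.e. `(i,0)`), `1` elsewhere. -/
def GdWeight (d : ℕ) (p : Fin d × ZMod 5) : ℕ := if p.2 = 0 then 2 else 1

/-!
Split an independent set `s` of `Gd d` into its slices, one independent set of `C_5` per copy.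
In `C_5` with weight `2` on one vertex, an independent set weighs at most `3`, and at most `2`
if it avoids the heavy vertex. Since the heavy vertices form a clique, at most one slice contains
its heavy vertex, so `s` weighs at most `2d + 1`. Taking `{v_{1,1}, v_{1,3}}` in the first copy
and `{v_{i,2}, v_{i,4}}` in every other copy attains this bound.
-/

open SimpleGraph Finset

abbrev cycle5 : SimpleGraph (ZMod 5) := circulantGraph {1}

def cycleWeight (j : ZMod 5) : ℕ := if j = 0 then 2 else 1

lemma cycleWeight_sum_le_of_isIndepSet {t : Finset (ZMod 5)} (ht : cycle5.IsIndepSet t) :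
    ∑ j ∈ t, cycleWeight j ≤ 2 + if 0 ∈ t then 1 else 0 := by
  revert t
  unfold cycleWeight
  decide

lemma sum_two_add_ite_eq {ι : Type*} [Fintype ι] (P : ι → Prop) [DecidablePred P] :
    ∑ i, (2 + if P i then 1 else 0) = 2 * Fintype.card ι + #{i | P i} := by
  rw [sum_add_distrib, sum_boole, sum_const, card_univ, smul_eq_mul, mul_comm, Nat.cast_id]

namespace Gd

variable {d : ℕ}

lemma adj_iff {i i' : Fin d} {a b : ZMod 5} :
    (Gd d).Adj (i, a) (i', b) ↔
      (i = i' ∧ cycle5.Adj a b) ∨ (i ≠ i' ∧ a = 0 ∧ b = 0) := by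
  simp only [Gd, circulantGraph_adj, Set.mem_singleton_iff]
  grind

def slice (s : Finset (Fin d × ZMod 5)) (i : Fin d) : Finset (ZMod 5) := {j | (i, j) ∈ s}

@[simp]
lemma mem_slice {s : Finset (Fin d × ZMod 5)} {i : Fin d} {j : ZMod 5} :
    j ∈ slice s i ↔ (i, j) ∈ s := by
  simp [slice]

def ofSlices (t : Fin d → Finset (ZMod 5)) : Finset (Fin d × ZMod 5) := {p | p.2 ∈ t p.1}

@[simp]
lemma slice_ofSlices (t : Fin d → Finset (ZMod 5)) (i : Fin d) : slice (ofSlices t) i = t i := by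
  ext; simp [ofSlices]

lemma weight_eq_sum_slice (s : Finset (Fin d × ZMod 5)) :
    ∑ p ∈ s, GdWeight d p = ∑ i, ∑ j ∈ slice s i, cycleWeight j :=
  sum_finset_product _ _ _ (by simp)

lemma isIndepSet_iff_slice {s : Finset (Fin d × ZMod 5)} :
    (Gd d).IsIndepSet s ↔
      (∀ i, cycle5.IsIndepSet (slice s i)) ∧ {i | 0 ∈ slice s i}.Subsingleton := by
  constructor
  · intro hs
    refine ⟨fun i a ha b hb hab hadj => ?_, fun i hi i' hi' => by_contra fun hii' => ?_⟩
    · exact hs (mem_slice.mp ha) (mem_slice.mp hb) (by simpa using hab)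
        (adj_iff.mpr (.inl ⟨rfl, hadj⟩))
    · exact hs (mem_slice.mp hi) (mem_slice.mp hi') (by simpa using hii')
        (adj_iff.mpr (.inr ⟨hii', rfl, rfl⟩))
  · rintro ⟨hslice, hzero⟩ ⟨i, a⟩ hp ⟨i', b⟩ hq hpq hadj
    rcases adj_iff.mp hadj with ⟨rfl, hab⟩ | ⟨hii', rfl, rfl⟩
    · exact hslice i (mem_slice.mpr hp) (mem_slice.mpr hq) (cycle5.ne_of_adj hab) hab
    · exact hii' (hzero (mem_slice.mpr hp) (mem_slice.mpr hq))

lemma weight_le_of_isIndepSet {s : Finset (Fin d × ZMod 5)} (hs : (Gd d).IsIndepSet s) :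
    ∑ p ∈ s, GdWeight d p ≤ 2 * d + 1 := by
  obtain ⟨hslice, hzero⟩ := isIndepSet_iff_slice.mp hs
  have hcard : #{i | 0 ∈ slice s i} ≤ 1 :=
    card_le_one.mpr fun i hi i' hi' => hzero (by simpa using hi) (by simpa using hi')
  calc ∑ p ∈ s, GdWeight d p
      = ∑ i, ∑ j ∈ slice s i, cycleWeight j := weight_eq_sum_slice s
    _ ≤ ∑ i, (2 + if 0 ∈ slice s i then 1 else 0) := by
      gcongr with i
      exact cycleWeight_sum_le_of_isIndepSet (hslice i)
    _ ≤ 2 * d + 1 := by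
      rw [sum_two_add_ite_eq, Fintype.card_fin]
      omega

lemma exists_isIndepSet_weight_eq (hd : 0 < d) :
    ∃ s : Finset (Fin d × ZMod 5),
      (Gd d).IsIndepSet s ∧ ∑ p ∈ s, GdWeight d p = 2 * d + 1 := by
  let i₀ : Fin d := ⟨0, hd⟩
  let t : Fin d → Finset (ZMod 5) := fun i => if i = i₀ then {0, 2} else {1, 3}
  have isIndepSet_t (i : Fin d) : cycle5.IsIndepSet (t i) := by
    simp only [t]; split_ifs <;> decide
  have zero_mem_t_iff (i : Fin d) : 0 ∈ t i ↔ i = i₀ := by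
    by_cases h : i = i₀ <;> simp [t, h]
    decide
  have weight_t (i : Fin d) : ∑ j ∈ t i, cycleWeight j = 2 + if i = i₀ then 1 else 0 := by
    simp only [t]; split_ifs <;> decide
  refine ⟨ofSlices t, isIndepSet_iff_slice.mpr ⟨by simpa using isIndepSet_t, ?_⟩, ?_⟩
  · simp [zero_mem_t_iff]
  · simp only [weight_eq_sum_slice, slice_ofSlices, weight_t, sum_two_add_ite_eq,
      Fintype.card_fin, filter_eq', mem_univ, if_true, card_singleton]

end Gd

/-- The maximum weight of an independent set of `(𝒢_d, w)` is `2d + 1`. -/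
theorem stmt_5 (d : ℕ) (hd : 3 ≤ d) :
    IsGreatest {t : ℕ | ∃ s : Finset (Fin d × ZMod 5),
        (s : Set (Fin d × ZMod 5)).Pairwise (fun p q => ¬ (Gd d).Adj p q) ∧
        t = ∑ p ∈ s, GdWeight d p}
      (2 * d + 1) := by
  refine ⟨?_, ?_⟩
  · obtain ⟨s, hs, hw⟩ := Gd.exists_isIndepSet_weight_eq (d := d) (by omega)
    exact ⟨s, hs, hw.symm⟩
  · rintro _ ⟨s, hs, rfl⟩
    exact Gd.weight_le_of_isIndepSet hs
end

section
/- The weighted fractional packing number of the graph G_d (d disjoint 5-cycles with their first vertices joined into a clique, first vertices weighted 2, others weighted 1) equals 2d + 2, for all d ≥ 3. -/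
/-- Weights: `2` on each first vertex `v_{i,1}` (i.e. `(i,0)`), `1` elsewhere. -/
noncomputable def GdWeightR (d : ℕ) (p : Fin d × ZMod 5) : ℝ := if p.2 = 0 then 2 else 1

open Finset

theorem SimpleGraph.add_le_one_of_adj {V : Type*} {G : SimpleGraph V} {p : V → ℝ}
    (hp : ∀ C : Finset V, G.IsClique (C : Set V) → ∑ v ∈ C, p v ≤ 1) {a b : V} (hab : G.Adj a b) :
    p a + p b ≤ 1 := by
  classical
  have hclique : G.IsClique (({a, b} : Finset V) : Set V) := by
    rw [coe_pair]
    exact SimpleGraph.isClique_pair.mpr fun _ => hab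
  simpa [sum_pair hab.ne] using hp _ hclique

theorem ZMod.five_not_three_pairwise_consecutive (a b c : ZMod 5) (hab : a ≠ b) (hac : a ≠ c)
    (hbc : b ≠ c) (h₁ : a - b = 1 ∨ b - a = 1) (h₂ : a - c = 1 ∨ c - a = 1) :
    ¬(b - c = 1 ∨ c - b = 1) := by
  revert a b c
  decide

theorem Fintype.sum_ite_eq_add_nsmul {ι M : Type*} [Fintype ι] [DecidableEq ι] [AddCommMonoid M]
    (a : ι) (x y : M) : ∑ j, (if j = a then x else y) = x + (Fintype.card ι - 1) • y := by
  rw [Fintype.sum_eq_add_sum_compl a, if_pos rfl,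
    sum_ite_of_false fun j hj => by simpa using hj, sum_const, card_compl, card_singleton]

theorem ZMod.sum_univ_five {M : Type*} [AddCommMonoid M] (f : ZMod 5 → M) :
    ∑ j, f j = f 0 + f 1 + f 2 + f 3 + f 4 :=
  Fin.sum_univ_five f

namespace Gd

variable {d : ℕ}

theorem sum_weight_mul (p : Fin d × ZMod 5 → ℝ) :
    ∑ v, GdWeightR d v * p v = ∑ v, p v + ∑ i, p (i, 0) := by
  have hsplit (v : Fin d × ZMod 5) : GdWeightR d v * p v = p v + if v.2 = 0 then p v else 0 := by
    unfold GdWeightR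
    split_ifs <;> ring
  simp only [hsplit, sum_add_distrib, Fintype.sum_prod_type, Fintype.sum_ite_eq']

theorem isClique_firstVertices :
    (Gd d).IsClique ((univ.map (Function.Embedding.sectL (Fin d) (0 : ZMod 5))) : Set _) := by
  simp only [coe_map, coe_univ, Set.image_univ]
  rintro _ ⟨i, rfl⟩ _ ⟨j, rfl⟩ hij
  exact Or.inr ⟨fun h => hij (Prod.ext h rfl), rfl, rfl⟩

theorem weighted_sum_le {p : Fin d × ZMod 5 → ℝ}
    (hp : ∀ C : Finset (Fin d × ZMod 5), (Gd d).IsClique (C : Set _) → ∑ v ∈ C, p v ≤ 1) :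
    ∑ v, GdWeightR d v * p v ≤ 2 * d + 2 := by
  have hfirst : ∑ i, p (i, 0) ≤ 1 := by
    simpa using hp _ isClique_firstVertices
  have hblock (i : Fin d) : ∑ j, p (i, j) ≤ p (i, 0) + 2 := by
    have h₁₂ := SimpleGraph.add_le_one_of_adj hp (a := (i, 1)) (b := (i, 2))
      (Or.inl ⟨rfl, Or.inr rfl⟩)
    have h₃₄ := SimpleGraph.add_le_one_of_adj hp (a := (i, 3)) (b := (i, 4))
      (Or.inl ⟨rfl, Or.inr rfl⟩)
    rw [ZMod.sum_univ_five]
    linarith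
  calc ∑ v, GdWeightR d v * p v = ∑ i, ∑ j, p (i, j) + ∑ i, p (i, 0) := by
        rw [sum_weight_mul, Fintype.sum_prod_type]
    _ ≤ ∑ i, (p (i, 0) + 2) + ∑ i, p (i, 0) := by gcongr with i; exact hblock i
    _ = 2 * ∑ i, p (i, 0) + 2 * d := by
        simp only [sum_add_distrib, sum_const, card_univ, Fintype.card_fin, nsmul_eq_mul]
        ring
    _ ≤ 2 * d + 2 := by linarith

theorem card_le_two_of_isClique_of_fst_eq {C : Finset (Fin d × ZMod 5)}
    (hC : (Gd d).IsClique (C : Set _)) (hfst : ∀ u ∈ C, ∀ v ∈ C, u.1 = v.1) : #C ≤ 2 := by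
  by_contra! h
  obtain ⟨a, ha, b, hb, c, hc, hab, hac, hbc⟩ := two_lt_card.mp h
  have hsnd {u v} (hu : u ∈ C) (hv : v ∈ C) (huv : u ≠ v) :
      u.2 ≠ v.2 ∧ (u.2 - v.2 = 1 ∨ v.2 - u.2 = 1) := by
    refine ⟨fun h => huv (Prod.ext (hfst u hu v hv) h), ?_⟩
    rcases hC hu hv huv with ⟨-, h⟩ | ⟨hne, -⟩
    · exact h
    · exact absurd (hfst u hu v hv) hne
  obtain ⟨hab', h₁⟩ := hsnd ha hb hab
  obtain ⟨hac', h₂⟩ := hsnd ha hc hac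
  obtain ⟨hbc', h₃⟩ := hsnd hb hc hbc
  exact ZMod.five_not_three_pairwise_consecutive _ _ _ hab' hac' hbc' h₁ h₂ h₃

theorem snd_eq_zero_of_isClique {C : Finset (Fin d × ZMod 5)} (hC : (Gd d).IsClique (C : Set _))
    {a b : Fin d × ZMod 5} (ha : a ∈ C) (hb : b ∈ C) (hab : a.1 ≠ b.1) : ∀ v ∈ C, v.2 = 0 := by
  have hzero {u v} (hu : u ∈ C) (hv : v ∈ C) (huv : u.1 ≠ v.1) : u.2 = 0 := by
    rcases hC hu hv (fun h => huv (h ▸ rfl)) with ⟨h, -⟩ | ⟨-, h, -⟩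
    · exact absurd h huv
    · exact h
  intro v hv
  by_cases hva : v.1 = a.1
  · exact hzero hv hb (hva ▸ hab)
  · exact hzero hv ha hva

theorem card_le_of_forall_snd_eq_zero {C : Finset (Fin d × ZMod 5)} (hC : ∀ v ∈ C, v.2 = 0) :
    #C ≤ d := by
  calc #C ≤ #(univ : Finset (Fin d)) :=
        card_le_card_of_injOn Prod.fst (fun _ _ => mem_coe.mpr (mem_univ _))
          fun u hu v hv h => Prod.ext h ((hC u hu).trans (hC v hv).symm)
    _ = d := card_fin d

theorem isClique_forall_snd_eq_zero_or_card_le_two {C : Finset (Fin d × ZMod 5)}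
    (hC : (Gd d).IsClique (C : Set _)) : (∀ v ∈ C, v.2 = 0) ∨ #C ≤ 2 := by
  by_cases hsplit : ∃ a ∈ C, ∃ b ∈ C, a.1 ≠ b.1
  · obtain ⟨a, ha, b, hb, hab⟩ := hsplit
    exact Or.inl (snd_eq_zero_of_isClique hC ha hb hab)
  · push Not at hsplit
    exact Or.inr (card_le_two_of_isClique_of_fst_eq hC hsplit)

noncomputable def optPacking (d : ℕ) (v : Fin d × ZMod 5) : ℝ :=
  if v.2 = 0 then (d : ℝ)⁻¹ else 1 / 2

theorem optPacking_mem_Icc (hd : 2 ≤ d) (v : Fin d × ZMod 5) : optPacking d v ∈ Set.Icc 0 1 := by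
  have hd' : (2 : ℝ) ≤ d := by exact_mod_cast hd
  unfold optPacking
  split_ifs
  · exact ⟨by positivity, inv_le_one_of_one_le₀ (by linarith)⟩
  · norm_num

theorem sum_optPacking_le_one (hd : 2 ≤ d) {C : Finset (Fin d × ZMod 5)}
    (hC : (Gd d).IsClique (C : Set _)) : ∑ v ∈ C, optPacking d v ≤ 1 := by
  have hd' : (2 : ℝ) ≤ d := by exact_mod_cast hd
  rcases isClique_forall_snd_eq_zero_or_card_le_two hC with hfirst | hcard
  · calc ∑ v ∈ C, optPacking d v = #C * (d : ℝ)⁻¹ := by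
          rw [sum_congr rfl fun v hv => show optPacking d v = (d : ℝ)⁻¹ from if_pos (hfirst v hv)]
          simp
      _ ≤ d * (d : ℝ)⁻¹ := by
          gcongr
          exact_mod_cast card_le_of_forall_snd_eq_zero hfirst
      _ = 1 := mul_inv_cancel₀ (by positivity)
  · have hle : ∀ v ∈ C, optPacking d v ≤ 1 / 2 := fun v _ => by
      unfold optPacking
      split_ifs
      · rw [one_div]
        exact inv_anti₀ (by norm_num) hd'
      · rfl
    calc ∑ v ∈ C, optPacking d v ≤ #C • (1 / 2 : ℝ) := sum_le_card_nsmul _ _ _ hle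
      _ ≤ 2 • (1 / 2 : ℝ) := by gcongr
      _ = 1 := by norm_num

theorem weighted_sum_optPacking (hd : d ≠ 0) :
    ∑ v, GdWeightR d v * optPacking d v = 2 * d + 2 := by
  have hblock (i : Fin d) : ∑ j, optPacking d (i, j) = (d : ℝ)⁻¹ + 2 := by
    rw [show ∑ j, optPacking d (i, j) = ∑ j : ZMod 5, if j = 0 then (d : ℝ)⁻¹ else 1 / 2 from rfl,
      Fintype.sum_ite_eq_add_nsmul, ZMod.card]
    norm_num
  have hfirst (i : Fin d) : optPacking d (i, 0) = (d : ℝ)⁻¹ := if_pos rfl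
  rw [sum_weight_mul, Fintype.sum_prod_type]
  simp only [hblock, hfirst, sum_const, card_univ, Fintype.card_fin, nsmul_eq_mul]
  field_simp
  ring

end Gd

/-- The weighted fractional packing number of `(𝒢_d, w)` equals `2d + 2` for `d ≥ 3`:
it is the greatest value of `Σ_v w_v p_v` over `0 ≤ p ≤ 1` satisfying
`Σ_{v ∈ C} p_v ≤ 1` for every clique `C`. -/
theorem stmt_6 (d : ℕ) (hd : 3 ≤ d) :
    IsGreatest {t : ℝ | ∃ p : Fin d × ZMod 5 → ℝ,
        (∀ v, 0 ≤ p v ∧ p v ≤ 1) ∧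
        (∀ C : Finset (Fin d × ZMod 5), (Gd d).IsClique (C : Set (Fin d × ZMod 5)) →
          ∑ v ∈ C, p v ≤ 1) ∧
        t = ∑ v, GdWeightR d v * p v}
      (2 * d + 2) := by
  refine ⟨⟨Gd.optPacking d, Gd.optPacking_mem_Icc (by omega), fun C hC =>
    Gd.sum_optPacking_le_one (by omega) hC, (Gd.weighted_sum_optPacking (by omega)).symm⟩, ?_⟩
  rintro t ⟨p, -, hp, rfl⟩
  exact Gd.weighted_sum_le hp
end

section
/- Under the uniform measure (1/(4π))dσ on the unit sphere S² ⊂ ℝ³, the measure of the set {λ : neither φ·(ψ+λ) > 0, φ'·(ψ+λ) ≤ 0 nor the reverse holds}, with ψ = (0,0,1), φ = (cos θ_c, 0, sin θ_c), φ' = (-cos θ_c, 0, sin θ_c), computed via the paper's integral 1 - 2∫₀^{π/2-θ_c} (1/2) sin θ dθ, equals sin θ_c; moreover sin θ_c > sin²θ_c for all θ_c ∈ (0, π/2). -/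
open Real

theorem stmt_12 (θc : ℝ) (h : θc ∈ Set.Ioo 0 (π / 2)) :
    1 - 2 * ∫ θ in (0:ℝ)..(π / 2 - θc), (1 / 2) * sin θ = sin θc ∧
    sin θc > sin θc ^ 2 := by
  obtain ⟨h0, h1⟩ := h
  constructor
  · rw [intervalIntegral.integral_const_mul, integral_sin]
    rw [Real.cos_pi_div_two_sub]
    simp
  · have hs : 0 < sin θc := sin_pos_of_pos_of_lt_pi h0 (by linarith [pi_pos])
    have hlt : sin θc < 1 := by
      rw [← Real.sin_pi_div_two]
      exact Real.strictMonoOn_sin.lt_iff_lt ⟨by linarith [pi_pos], h1.le⟩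
        ⟨by linarith [pi_pos], le_refl _⟩ |>.mpr h1
    nlinarith
end

section
/- Let G = (V, E) be a finite graph with positive vertex weights w, and let Γ be its set of maximal cliques with each vertex v lying in n_v maximal cliques. Construct G'' on the vertex set V_ε = {(v, C) : v ∈ V, C ∈ Γ, v ∈ C}, with (v,C) adjacent to (u,C') iff v ≠ u and (v,u) ∈ E, and weights w_ε(v,C) = w(v)/n_v. Then the weighted independence numbers satisfy α(G, w) = α(G'', w_ε). -/
/-!
The lifted graph is the pull-back of `G` along the projection `(v, C) ↦ v`, whose fibre over
`v` has `n_v` elements, and every vertex lies in some maximal clique. For any surjection `f`,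
the full preimage of an independent set of `G` is independent in `G.comap f` and carries the
same weight, since each fibre of `f` has total weight `w v`. Conversely, an independent set of
`G.comap f` projects onto an independent set of `G`, and the copies of `v` it contains weigh at
most `w v` if `w v > 0` and at most `0` otherwise, so dropping the vertices of non-positive
weight from the projection gives an independent set of `G` that is at least as heavy.
-/

open Finset
open scoped Classical

variable {V : Type*}

/-- `C` is a maximal clique of `G`. -/
def IsMaxClique [DecidableEq V] (G : SimpleGraph V) (C : Finset V) : Prop :=
  G.IsClique (C : Set V) ∧ ∀ C' : Finset V, G.IsClique (C' : Set V) → C ⊆ C' → C = C'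

/-- The number `n_v` of maximal cliques of `G` containing `v`. -/
noncomputable def numMaxCliques [DecidableEq V] (G : SimpleGraph V) (v : V) : ℕ :=
  Nat.card {C : Finset V // IsMaxClique G C ∧ v ∈ C}

/-- The weighted independence number `α(G, w)`: the supremum of total weights of
sets of pairwise non-adjacent vertices. -/
noncomputable def weightedIndepNum {W : Type*} [Fintype W] (G : SimpleGraph W)
    (w : W → ℝ) : ℝ :=
  sSup {t : ℝ | ∃ s : Finset W,
    (s : Set W).Pairwise (fun a b => ¬ G.Adj a b) ∧ t = ∑ v ∈ s, w v}

/-- The lifted graph `G''` on pairs `(v, C)` of a vertex together with a maximal clique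
containing it: `(v, C)` and `(u, C')` are adjacent iff `v ≠ u` and `v, u` are adjacent
in `G`. -/
def liftedGraph [DecidableEq V] (G : SimpleGraph V) :
    SimpleGraph {p : V × Finset V // IsMaxClique G p.2 ∧ p.1 ∈ p.2} where
  Adj p q := p.1.1 ≠ q.1.1 ∧ G.Adj p.1.1 q.1.1
  symm := by constructor; intro p q h; exact ⟨h.1.symm, h.2.symm⟩
  loopless := by constructor; intro p h; exact h.1 rfl

namespace SimpleGraph

variable {W : Type*}

lemma bddAbove_indepSet_weights [Fintype W] (G : SimpleGraph W) (w : W → ℝ) :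
    BddAbove {t : ℝ | ∃ s : Finset W,
      (s : Set W).Pairwise (fun a b => ¬ G.Adj a b) ∧ t = ∑ v ∈ s, w v} := by
  refine ((Set.finite_range fun s : Finset W => ∑ v ∈ s, w v).subset ?_).bddAbove
  rintro t ⟨s, -, rfl⟩
  exact ⟨s, rfl⟩

lemma weightedIndepNum_le_of_forall_exists [Fintype V] [Fintype W] {G : SimpleGraph W}
    {H : SimpleGraph V} {w : W → ℝ} {w' : V → ℝ}
    (h : ∀ s : Finset W, G.IsIndepSet (s : Set W) →
      ∃ t : Finset V, H.IsIndepSet (t : Set V) ∧ ∑ v ∈ s, w v ≤ ∑ v ∈ t, w' v) :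
    weightedIndepNum G w ≤ weightedIndepNum H w' := by
  refine csSup_le ⟨0, ∅, by simp, by simp⟩ ?_
  rintro _ ⟨s, hs, rfl⟩
  obtain ⟨t, ht, hst⟩ := h s hs
  exact hst.trans (le_csSup (bddAbove_indepSet_weights H w') ⟨t, ht, rfl⟩)

lemma IsIndepSet.preimage {G : SimpleGraph V} {s : Set V} (hs : G.IsIndepSet s) (f : W → V) :
    (G.comap f).IsIndepSet (f ⁻¹' s) :=
  fun _ hp _ hq _ hadj => hs hp hq (G.ne_of_adj hadj) hadj

lemma IsIndepSet.image_of_comap {G : SimpleGraph V} {f : W → V} {t : Set W}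
    (ht : (G.comap f).IsIndepSet t) : G.IsIndepSet (f '' t) := by
  rintro _ ⟨p, hp, rfl⟩ _ ⟨q, hq, rfl⟩ hpq
  exact ht hp hq (ne_of_apply_ne f hpq)

variable [Fintype W] [DecidableEq V] {f : W → V}

lemma card_filter_fiber_nsmul_div_le (s : Finset W) (w : V → ℝ) (v : V) :
    #{p ∈ s | f p = v} • (w v / #{p | f p = v}) ≤ if 0 < w v then w v else 0 := by
  rw [nsmul_eq_mul]
  split_ifs with hv
  · have hcard : (#{p ∈ s | f p = v} : ℝ) ≤ #{p | f p = v} := by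
      gcongr
      exact subset_univ s
    calc (#{p ∈ s | f p = v} : ℝ) * (w v / #{p | f p = v})
        ≤ #{p | f p = v} * (w v / #{p | f p = v}) := by
          gcongr
      _ ≤ w v := by
          rcases eq_or_ne (#{p | f p = v} : ℝ) 0 with h | h
          · simp [h, hv.le]
          · rw [mul_div_cancel₀ _ h]
  · exact mul_nonpos_of_nonneg_of_nonpos (Nat.cast_nonneg _)
      (div_nonpos_of_nonpos_of_nonneg (not_lt.1 hv) (Nat.cast_nonneg _))

lemma sum_div_card_fiber_le (s : Finset W) (w : V → ℝ) :
    ∑ p ∈ s, w (f p) / #{q | f q = f p} ≤ ∑ v ∈ s.image f with 0 < w v, w v := by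
  rw [sum_filter, sum_comp (fun v => w v / #{q | f q = v}) f]
  exact sum_le_sum fun v _ => card_filter_fiber_nsmul_div_le s w v

lemma sum_preimage_div_card_fiber (hf : Function.Surjective f) (s : Finset V) (w : V → ℝ) :
    ∑ p with f p ∈ s, w (f p) / #{q | f q = f p} = ∑ v ∈ s, w v := by
  have himage : ({p | f p ∈ s} : Finset W).image f = s := by
    ext v
    simp only [mem_image, mem_filter, mem_univ, true_and]
    refine ⟨?_, fun hv => ?_⟩
    · rintro ⟨p, hp, rfl⟩
      exact hp
    · obtain ⟨p, rfl⟩ := hf v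
      exact ⟨p, hv, rfl⟩
  rw [sum_comp (fun v => w v / #{q | f q = v}) f, himage]
  refine sum_congr rfl fun v hv => ?_
  have hfibre : ({p | f p ∈ s} : Finset W).filter (f · = v) = ({p | f p = v} : Finset W) := by
    ext p
    simp only [mem_filter, mem_univ, true_and, and_iff_right_iff_imp]
    rintro rfl
    exact hv
  have hcard : (#{p | f p = v} : ℝ) ≠ 0 := by
    obtain ⟨p, rfl⟩ := hf v
    exact_mod_cast (card_pos.2 ⟨p, by simp⟩).ne'
  rw [hfibre, nsmul_eq_mul, mul_div_cancel₀ _ hcard]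

theorem weightedIndepNum_comap_div_card_fiber [Fintype V] (G : SimpleGraph V) (w : V → ℝ)
    (hf : Function.Surjective f) :
    weightedIndepNum (G.comap f) (fun p => w (f p) / #{q | f q = f p}) = weightedIndepNum G w := by
  refine le_antisymm (weightedIndepNum_le_of_forall_exists fun t ht => ?_)
    (weightedIndepNum_le_of_forall_exists fun s hs => ?_)
  · refine ⟨{v ∈ t.image f | 0 < w v}, ?_, sum_div_card_fiber_le t w⟩
    refine ht.image_of_comap.mono ?_
    rw [← coe_image]
    exact coe_subset.2 (filter_subset _ _)
  · refine ⟨({p | f p ∈ s} : Finset W), ?_, (sum_preimage_div_card_fiber hf s w).ge⟩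
    rw [coe_filter_univ]
    exact hs.preimage f

end SimpleGraph

lemma exists_isMaxClique_mem [Finite V] [DecidableEq V] (G : SimpleGraph V) (v : V) :
    ∃ C : Finset V, IsMaxClique G C ∧ v ∈ C := by
  obtain ⟨C, hvC, hmax⟩ :=
    (Set.toFinite {C : Finset V | G.IsClique (C : Set V)}).exists_le_maximal (a := {v}) (by simp)
  exact ⟨C, ⟨hmax.prop, fun _ => hmax.eq_of_le⟩, singleton_subset_iff.1 hvC⟩

lemma liftedGraph_eq_comap [DecidableEq V] (G : SimpleGraph V) :
    liftedGraph G = G.comap fun p => p.1.1 := by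
  ext p q
  exact ⟨fun h => h.2, fun h => ⟨G.ne_of_adj h, h⟩⟩

lemma numMaxCliques_eq_card_fiber [Fintype V] [DecidableEq V] (G : SimpleGraph V) (v : V) :
    numMaxCliques G v =
      #{p : {p : V × Finset V // IsMaxClique G p.2 ∧ p.1 ∈ p.2} | p.1.1 = v} := by
  rw [numMaxCliques, ← Fintype.card_subtype, ← Nat.card_eq_fintype_card]
  exact Nat.card_congr
    { toFun := fun C => ⟨⟨(v, C.1), C.2⟩, rfl⟩
      invFun := fun p => ⟨p.1.1.2, p.1.2.1, by simpa [← p.2] using p.1.2.2⟩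
      left_inv := fun C => rfl
      right_inv := by rintro ⟨⟨⟨u, C⟩, h⟩, rfl⟩; rfl }

theorem stmt_16_general [Fintype V] [DecidableEq V] (G : SimpleGraph V) (w : V → ℝ) :
    weightedIndepNum G w =
      weightedIndepNum (liftedGraph G)
        (fun p => w p.1.1 / (numMaxCliques G p.1.1 : ℝ)) := by
  have hproj : Function.Surjective
      fun p : {p : V × Finset V // IsMaxClique G p.2 ∧ p.1 ∈ p.2} => p.1.1 := fun v =>
    let ⟨C, hC⟩ := exists_isMaxClique_mem G v
    ⟨⟨(v, C), hC⟩, rfl⟩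
  simp_rw [liftedGraph_eq_comap, numMaxCliques_eq_card_fiber]
  exact (SimpleGraph.weightedIndepNum_comap_div_card_fiber G w hproj).symm

/-- The weighted independence number is preserved under the ε-graph lifting:
`α(G, w) = α(G'', w_ε)` with `w_ε(v, C) = w(v) / n_v`. -/
theorem stmt_16 [Fintype V] [DecidableEq V] (G : SimpleGraph V) (w : V → ℝ)
    (hw : ∀ v, 0 < w v) :
    weightedIndepNum G w =
      weightedIndepNum (liftedGraph G)
        (fun p => w p.1.1 / (numMaxCliques G p.1.1 : ℝ)) :=
  stmt_16_general G w
end
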